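/- Let x_1, …, x_n be real numbers, S_F = diag(e^{i x_1}, …, e^{i x_n}) ∈ ℂ^{n×n}, and R ∈ ℂ^{n×n} the diagonal matrix with R_{kk} = (1 − e^{−i x_k})/|1 − e^{−i x_k}| if e^{−i x_k} ≠ 1 and R_{kk} = i otherwise. Then S_F R = −conj(R), and for every real matrix M ∈ ℝ^{n×m} one has R [M | −S_F M] = [R M | conj(R) M]; since R is unitary, the matrices [M | −S_F M] and [R M | conj(R) M] have the same singular values and the same right singular vectors. -/

import Mathlib

open Matrix
open scoped Classical

open ComplexConjugate

namespace Complex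

/-- The entry `R_kk` of the paper, as a function of `z = e^{-i x_k}`. -/
noncomputable def unitDirOneSub (z : ℂ) : ℂ :=
  if z ≠ 1 then (1 - z) / (‖1 - z‖ : ℂ) else I

theorem conj_unitDirOneSub_mul_self (z : ℂ) : conj (unitDirOneSub z) * unitDirOneSub z = 1 := by
  by_cases hz : z = 1
  · simp [unitDirOneSub, hz]
  · have hnorm : (‖1 - z‖ : ℂ) ≠ 0 := by
      exact_mod_cast norm_ne_zero_iff.mpr (sub_ne_zero.mpr (Ne.symm hz))
    rw [unitDirOneSub, if_pos hz, map_div₀, conj_ofReal, div_mul_div_comm, conj_mul']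
    field_simp

/-- On the unit circle `conj z = z⁻¹`, so `conj z * (1 - z) = conj z - 1 = -conj (1 - z)`. -/
theorem conj_mul_unitDirOneSub {z : ℂ} (hz : ‖z‖ = 1) :
    conj z * unitDirOneSub z = -conj (unitDirOneSub z) := by
  by_cases h1 : z = 1
  · simp [unitDirOneSub, h1]
  · have hzz : conj z * z = 1 := by
      rw [conj_mul', hz]; norm_num
    rw [unitDirOneSub, if_pos h1, map_div₀, conj_ofReal, mul_div_assoc', map_sub, map_one,
      ← neg_div]
    congr 1
    linear_combination -hzz

theorem exp_mul_unitDirOneSub_exp_neg (t : ℝ) :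
    exp (I * t) * unitDirOneSub (exp (-(I * t))) = -conj (unitDirOneSub (exp (-(I * t)))) := by
  have hconj : conj (exp (-(I * t))) = exp (I * t) := by
    rw [← exp_conj]; simp
  have hnorm : ‖exp (-(I * t))‖ = 1 := by
    rw [show -(I * t) = ((-t : ℝ) : ℂ) * I by push_cast; ring]
    exact norm_exp_ofReal_mul_I _
  rw [← hconj]
  exact conj_mul_unitDirOneSub hnorm

end Complex

namespace Matrix

variable {ι κ α : Type*} [Fintype ι] [DecidableEq ι] [Semiring α] [StarRing α]

theorem diagonal_conjTranspose_mul_self_eq_one {v : ι → α}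
    (hv : ∀ i, star (v i) * v i = 1) : (diagonal v)ᴴ * diagonal v = 1 := by
  rw [diagonal_conjTranspose, diagonal_mul_diagonal, ← diagonal_one]
  exact congrArg diagonal (funext hv)

theorem conjTranspose_mul_self_of_unitary_mul {U : Matrix ι ι α} (hU : Uᴴ * U = 1)
    (B : Matrix ι κ α) : (U * B)ᴴ * (U * B) = Bᴴ * B := by
  rw [conjTranspose_mul, Matrix.mul_assoc, ← Matrix.mul_assoc Uᴴ, hU, Matrix.one_mul]

end Matrix

theorem stmt_16 (m n : ℕ)
    (x : Fin n → ℝ)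
    (SF : Matrix (Fin n) (Fin n) ℂ)
    (hSF : SF = Matrix.diagonal fun k => Complex.exp (Complex.I * (x k : ℝ)))
    (R : Matrix (Fin n) (Fin n) ℂ)
    (hR : R = Matrix.diagonal fun k =>
      if Complex.exp (-(Complex.I * (x k : ℝ))) ≠ 1 then
        (1 - Complex.exp (-(Complex.I * (x k : ℝ))))
          / (‖1 - Complex.exp (-(Complex.I * (x k : ℝ)))‖ : ℂ)
      else Complex.I)
    (M : Matrix (Fin n) (Fin m) ℝ)
    (B1 B2 : Matrix (Fin n) (Fin m ⊕ Fin m) ℂ)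
    (hB1l : ∀ k j, B1 k (Sum.inl j) = ((M k j : ℝ) : ℂ))
    (hB1r : ∀ k j, B1 k (Sum.inr j) = -Complex.exp (Complex.I * (x k : ℝ)) * ((M k j : ℝ) : ℂ))
    (hB2l : ∀ k j, B2 k (Sum.inl j) = (R * M.map (fun a => (a : ℂ))) k j)
    (hB2r : ∀ k j, B2 k (Sum.inr j) = ((R.map (starRingEnd ℂ)) * M.map (fun a => (a : ℂ))) k j) :
    SF * R = -(R.map (starRingEnd ℂ)) ∧
    Rᴴ * R = 1 ∧
    R * B1 = B2 ∧
    B1ᴴ * B1 = B2ᴴ * B2 := by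
  set d : Fin n → ℂ := fun k => Complex.unitDirOneSub (Complex.exp (-(Complex.I * (x k : ℝ))))
  have hRd : R = diagonal d := hR
  have hphase (k : Fin n) : Complex.exp (Complex.I * (x k : ℝ)) * d k = -conj (d k) :=
    Complex.exp_mul_unitDirOneSub_exp_neg (x k)
  have hconjR : R.map conj = diagonal (fun k => conj (d k)) := by
    rw [hRd, diagonal_map (map_zero _)]
  have hunit : Rᴴ * R = 1 :=
    hRd ▸ diagonal_conjTranspose_mul_self_eq_one fun k => Complex.conj_unitDirOneSub_mul_self _
  have hRB1 : R * B1 = B2 := by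
    ext k (j | j)
    · rw [hB2l, hRd, diagonal_mul, diagonal_mul, hB1l, map_apply]
    · rw [hB2r, hconjR, hRd, diagonal_mul, diagonal_mul, hB1r, map_apply]
      linear_combination -(M k j : ℂ) * hphase k
  refine ⟨?_, hunit, hRB1, by rw [← hRB1, conjTranspose_mul_self_of_unitary_mul hunit]⟩
  rw [hconjR, hSF, hRd, diagonal_mul_diagonal, diagonal_neg]
  exact congrArg diagonal (funext hphase)
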